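/- arXiv:2410.00710 — 4 statements merged into one kernel-verified Lean document; each statement's English description precedes it below -/
import Mathlib

section
/- Let m ≥ 1 and let A be an invertible m×m complex matrix. The following are equivalent: (i) for every Hermitian m×m complex matrix M with trace M ≥ 0, the trace of Aᴴ·M·A is ≥ 0 (both traces are real since M and AᴴMA are Hermitian); (ii) there exists a real number a > 0 such that A·Aᴴ = a·I_m, where I_m is the m×m identity matrix. -/
open Matrix
open scoped ComplexOrder

/-!
Put `B = A Aᴴ`; cyclicity of the trace gives `tr (Aᴴ M A) = tr (M B)`, which settles `(ii) → (i)`.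
Conversely, `M = (tr B / m) • 1 - B` is Hermitian and traceless, and `tr (M B) = -tr (M Mᴴ)`.
Hypothesis (i) thus forces `tr (M Mᴴ) ≤ 0`, so `M = 0` and `B` is scalar. The scalar `tr B / m`
is positive because `B` is positive definite when `A` is invertible.
-/

theorem Matrix.trace_mul_mul_eq_trace_mul_mul {R n : Type*} [CommSemiring R] [Fintype n]
    (A B M : Matrix n n R) : (B * M * A).trace = (M * (A * B)).trace :=
  (trace_mul_cycle B M A).trans (trace_mul_comm _ M)

theorem Matrix.IsHermitian.eq_trace_div_card_smul_one {𝕜 n : Type*} [RCLike 𝕜] [Fintype n]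
    [DecidableEq n] {B : Matrix n n 𝕜} (hB : B.IsHermitian)
    (h : ∀ M : Matrix n n 𝕜, M.IsHermitian → M.trace = 0 → 0 ≤ RCLike.re (M * B).trace) :
    B = (B.trace / Fintype.card n) • 1 := by
  rcases isEmpty_or_nonempty n with _ | _
  · exact Subsingleton.elim _ _
  set c := B.trace / Fintype.card n
  set M := c • 1 - B
  have hM : M.IsHermitian := by
    have hc : star c = c := by simp [c, ← trace_conjTranspose, hB.eq]
    simp [M, IsHermitian, hc, hB.eq]
  have htr : M.trace = 0 := by simp [M, c, trace_sub, trace_smul]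
  have hMM : (M * Mᴴ).trace = -(M * B).trace := by
    rw [hM.eq]
    nth_rw 2 [show M = c • 1 - B from rfl]
    simp [mul_sub, htr]
  have hzero : (M * Mᴴ).trace = 0 := by
    obtain ⟨hre, him⟩ := RCLike.nonneg_iff.mp (posSemidef_self_mul_conjTranspose M).trace_nonneg
    refine RCLike.ext (le_antisymm ?_ (by simpa using hre)) (by simpa using him)
    simpa [hMM] using h M hM htr
  exact (sub_eq_zero.mp (trace_mul_conjTranspose_self_eq_zero_iff.mp hzero)).symm

/-- For an invertible `m × m` complex matrix `A`, the map `M ↦ Tr(Aᴴ M A)` sends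
Hermitian matrices of nonnegative trace to matrices of nonnegative trace
if and only if `A Aᴴ = a • I` for some real `a > 0`. -/
theorem trace_nonneg_iff_scalar {m : ℕ} (hm : 1 ≤ m)
    (A : Matrix (Fin m) (Fin m) ℂ) (hA : IsUnit A) :
    (∀ M : Matrix (Fin m) (Fin m) ℂ, M.IsHermitian → 0 ≤ M.trace.re →
      0 ≤ (Aᴴ * M * A).trace.re) ↔
    ∃ a : ℝ, 0 < a ∧ A * Aᴴ = (a : ℂ) • (1 : Matrix (Fin m) (Fin m) ℂ) := by
  simp only [trace_mul_mul_eq_trace_mul_mul]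
  constructor
  · intro h
    have : Nonempty (Fin m) := ⟨⟨0, hm⟩⟩
    have hpos : (A * Aᴴ).PosDef :=
      .mul_conjTranspose_self A (vecMul_injective_iff_isUnit.mpr hA)
    have hscalar := hpos.isHermitian.eq_trace_div_card_smul_one
      fun M hM htr ↦ h M hM (by simp [htr])
    obtain ⟨a, ha, hac⟩ := RCLike.pos_iff_exists_ofReal.mp
      (div_pos hpos.trace_pos (Nat.cast_pos.mpr (Fintype.card_pos (α := Fin m))))
    -- the `rfl` identifies the `RCLike` coercion `ℝ → ℂ` with `Complex.ofReal`
    exact ⟨a, ha, hscalar.trans (by rw [← hac]; rfl)⟩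
  · rintro ⟨a, ha, hB⟩ M - htr
    rw [hB, Matrix.mul_smul, mul_one, trace_smul, smul_eq_mul, Complex.re_ofReal_mul]
    exact mul_nonneg ha.le htr
end

section
/- Let m ≥ 1 and let A be an m×m complex matrix. Suppose that for every Hermitian m×m complex matrix M with trace M ≥ 0, the trace of Aᴴ·M·A is ≥ 0. Then for every Hermitian m×m complex matrix M one has Tr(Aᴴ·M·A) = (1/m)·Tr(Aᴴ·A)·Tr(M). -/
/-!
A Hermitian `N` with `Tr N = 0` and its negative both satisfy the hypothesis, so the real part
of `Tr(Aᴴ N A)` vanishes, and its imaginary part vanishes because `Aᴴ N A` is Hermitian.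
Applying this to the traceless Hermitian matrix `m • M - Tr(M) • 1` gives the identity.
-/

open Matrix

namespace Matrix

variable {n k 𝕜 : Type*} [Fintype n] [Fintype k] [RCLike 𝕜]

theorem IsHermitian.isSelfAdjoint_trace {N : Matrix n n 𝕜} (hN : N.IsHermitian) :
    IsSelfAdjoint N.trace := by
  rw [IsSelfAdjoint, ← trace_conjTranspose, hN.eq]

theorem trace_conjTranspose_mul_mul_eq_zero {A : Matrix n k 𝕜}
    (h : ∀ M : Matrix n n 𝕜, M.IsHermitian → 0 ≤ RCLike.re M.trace →
      0 ≤ RCLike.re (Aᴴ * M * A).trace)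
    {N : Matrix n n 𝕜} (hN : N.IsHermitian) (htr : N.trace = 0) :
    (Aᴴ * N * A).trace = 0 := by
  have hpos := h N hN (by simp [htr])
  have hneg := h (-N) hN.neg (by simp [htr])
  rw [Matrix.mul_neg, Matrix.neg_mul, trace_neg, map_neg] at hneg
  refine RCLike.ext (by rw [map_zero]; linarith) ?_
  simpa using RCLike.conj_eq_iff_im.mp
    (isHermitian_conjTranspose_mul_mul A hN).isSelfAdjoint_trace.star_eq

theorem card_mul_trace_conjTranspose_mul_mul {A : Matrix n k 𝕜}
    (h : ∀ M : Matrix n n 𝕜, M.IsHermitian → 0 ≤ RCLike.re M.trace →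
      0 ≤ RCLike.re (Aᴴ * M * A).trace)
    {M : Matrix n n 𝕜} (hM : M.IsHermitian) :
    (Fintype.card n : 𝕜) * (Aᴴ * M * A).trace = (Aᴴ * A).trace * M.trace := by
  classical
  set N := (Fintype.card n : 𝕜) • M - M.trace • (1 : Matrix n n 𝕜)
  have hN : N.IsHermitian :=
    (hM.smul (.natCast _)).sub (isHermitian_one.smul hM.isSelfAdjoint_trace)
  have htr : N.trace = 0 := by
    simp only [N, trace_sub, trace_smul, smul_eq_mul, trace_one]
    ring
  have hzero := trace_conjTranspose_mul_mul_eq_zero h hN htr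
  simp only [N, Matrix.mul_sub, Matrix.mul_smul, Matrix.mul_one, Matrix.sub_mul, smul_mul,
    trace_sub, trace_smul, smul_eq_mul] at hzero
  linear_combination hzero

end Matrix

/-- If `M ↦ Tr(Aᴴ M A)` is nonnegative on Hermitian matrices with nonnegative trace,
then `Tr(Aᴴ M A) = (1/m) Tr(Aᴴ A) Tr(M)` for every Hermitian `M`. -/
theorem trace_identity_of_nonneg {m : ℕ} (hm : 1 ≤ m)
    (A : Matrix (Fin m) (Fin m) ℂ)
    (h : ∀ M : Matrix (Fin m) (Fin m) ℂ, M.IsHermitian → 0 ≤ M.trace.re →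
      0 ≤ (Aᴴ * M * A).trace.re) :
    ∀ M : Matrix (Fin m) (Fin m) ℂ, M.IsHermitian →
      (Aᴴ * M * A).trace = (1 / (m : ℂ)) * (Aᴴ * A).trace * M.trace := by
  intro M hM
  have hm0 : (m : ℂ) ≠ 0 := by exact_mod_cast (by omega : m ≠ 0)
  have key := card_mul_trace_conjTranspose_mul_mul h hM
  rw [Fintype.card_fin] at key
  field_simp
  linear_combination key
end

section
/- Let (Y, d) be a metric space and V : ℝ → Y a map. Suppose that the functions t ↦ d(V(0), V(t)) and t ↦ d(V(t), V(1)) are convex on the interval [0, 1]. Then for every t ∈ [0, 1], d(V(0), V(t)) = t·d(V(0), V(1)) and d(V(t), V(1)) = (1 − t)·d(V(0), V(1)). -/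
open Set

theorem ConvexOn.le_chord_of_mem_Icc {f : ℝ → ℝ} (hf : ConvexOn ℝ (Icc 0 1) f) {t : ℝ}
    (ht : t ∈ Icc (0 : ℝ) 1) : f t ≤ (1 - t) * f 0 + t * f 1 := by
  simpa using hf.2 (left_mem_Icc.2 zero_le_one) (right_mem_Icc.2 zero_le_one)
    (sub_nonneg.2 ht.2) ht.1 (sub_add_cancel 1 t)

theorem dist_eq_of_le_mul_of_le_one_sub_mul {Y : Type*} [PseudoMetricSpace Y] {x y z : Y} {t : ℝ}
    (hx : dist x z ≤ t * dist x y) (hy : dist z y ≤ (1 - t) * dist x y) :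
    dist x z = t * dist x y ∧ dist z y = (1 - t) * dist x y := by
  have triangle := dist_triangle x z y
  constructor <;> linarith

/-- If `t ↦ d(V 0, V t)` and `t ↦ d(V t, V 1)` are convex on `[0,1]`, then
`d(V 0, V t) = t d(V 0, V 1)` and `d(V t, V 1) = (1 − t) d(V 0, V 1)` on `[0,1]`. -/
theorem dist_eq_of_convex {Y : Type*} [MetricSpace Y] (V : ℝ → Y)
    (h0 : ConvexOn ℝ (Set.Icc (0 : ℝ) 1) (fun t => dist (V 0) (V t)))
    (h1 : ConvexOn ℝ (Set.Icc (0 : ℝ) 1) (fun t => dist (V t) (V 1))) :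
    ∀ t ∈ Set.Icc (0 : ℝ) 1,
      dist (V 0) (V t) = t * dist (V 0) (V 1) ∧
      dist (V t) (V 1) = (1 - t) * dist (V 0) (V 1) := by
  intro t ht
  refine dist_eq_of_le_mul_of_le_one_sub_mul ?_ ?_
  · simpa using h0.le_chord_of_mem_Icc ht
  · simpa using h1.le_chord_of_mem_Icc ht
end

section
/- Let (Y, d) be a metric space and V : ℝ → Y a map. Suppose that for every a ∈ [0, 1] the function t ↦ d(V(a), V(t)) is convex on the interval [0, 1]. Then for all s, t ∈ [0, 1], d(V(s), V(t)) = |s − t|·d(V(0), V(1)). -/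
/-!
Write `D = d(V 0, V 1)`. Convexity of `d(V a, ·)` along the chord from `a` to an endpoint gives,
for `s ≤ t`, both `(1 - s) d(V s, V t) ≤ (t - s) d(V s, V 1) ≤ (t - s)(1 - s) D` and
`t d(V s, V t) ≤ (t - s) d(V 0, V t) ≤ (t - s) t D`; adding them yields the upper bound
`d(V s, V t) ≤ (t - s) D` with no case split at the endpoints. The triangle inequality along
`V 0, V s, V t, V 1` then forces equality.
-/

theorem ConvexOn.sub_mul_le_of_mem_Icc {𝕜 : Type*} [Field 𝕜] [LinearOrder 𝕜]
    [IsStrictOrderedRing 𝕜] {s : Set 𝕜} {f : 𝕜 → 𝕜} (hf : ConvexOn 𝕜 s f) {x y z : 𝕜}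
    (hx : x ∈ s) (hz : z ∈ s) (hy : y ∈ Set.Icc x z) :
    (z - x) * f y ≤ (z - y) * f x + (y - x) * f z := by
  obtain ⟨hxy, hyz⟩ := hy
  rcases hxy.eq_or_lt with rfl | hxy
  · linarith
  rcases hyz.eq_or_lt with rfl | hyz
  · linarith
  exact hf.secant_mono_aux1 hx hz hxy hyz

section

variable {Y : Type*} [PseudoMetricSpace Y] {V : ℝ → Y}

theorem dist_le_sub_mul_of_convexOn_dist
    (h : ∀ a ∈ Set.Icc (0 : ℝ) 1,
      ConvexOn ℝ (Set.Icc (0 : ℝ) 1) (fun t => dist (V a) (V t)))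
    {s t : ℝ} (hs : s ∈ Set.Icc (0 : ℝ) 1) (ht : t ∈ Set.Icc (0 : ℝ) 1) (hst : s ≤ t) :
    dist (V s) (V t) ≤ (t - s) * dist (V 0) (V 1) := by
  have h0 : (0 : ℝ) ∈ Set.Icc (0 : ℝ) 1 := by norm_num
  have h1 : (1 : ℝ) ∈ Set.Icc (0 : ℝ) 1 := by norm_num
  set D := dist (V 0) (V 1)
  have from_start : dist (V 0) (V t) ≤ t * D := by
    simpa using (h 0 h0).sub_mul_le_of_mem_Icc h0 h1 ht
  have to_end : dist (V s) (V 1) ≤ (1 - s) * D := by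
    simpa [dist_comm] using (h 1 h1).sub_mul_le_of_mem_Icc h0 h1 hs
  have chord_s : (1 - s) * dist (V s) (V t) ≤ (t - s) * dist (V s) (V 1) := by
    simpa using (h s hs).sub_mul_le_of_mem_Icc hs h1 ⟨hst, ht.2⟩
  have chord_t : t * dist (V s) (V t) ≤ (t - s) * dist (V 0) (V t) := by
    simpa [dist_comm] using (h t ht).sub_mul_le_of_mem_Icc h0 ht ⟨hs.1, hst⟩
  have hts : 0 ≤ t - s := sub_nonneg.mpr hst
  have sum : (1 - s + t) * dist (V s) (V t) ≤ (1 - s + t) * ((t - s) * D) := by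
    linarith [mul_le_mul_of_nonneg_left from_start hts, mul_le_mul_of_nonneg_left to_end hts]
  exact le_of_mul_le_mul_left sum (by linarith [hs.2, ht.1])

theorem dist_eq_abs_sub_mul_of_dist_le_sub_mul
    (hV : ∀ s ∈ Set.Icc (0 : ℝ) 1, ∀ t ∈ Set.Icc (0 : ℝ) 1, s ≤ t →
      dist (V s) (V t) ≤ (t - s) * dist (V 0) (V 1))
    {s t : ℝ} (hs : s ∈ Set.Icc (0 : ℝ) 1) (ht : t ∈ Set.Icc (0 : ℝ) 1) :
    dist (V s) (V t) = |s - t| * dist (V 0) (V 1) := by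
  wlog hst : s ≤ t generalizing s t
  · rw [dist_comm, abs_sub_comm]
    exact this ht hs (le_of_not_ge hst)
  have h0 : (0 : ℝ) ∈ Set.Icc (0 : ℝ) 1 := by norm_num
  have h1 : (1 : ℝ) ∈ Set.Icc (0 : ℝ) 1 := by norm_num
  have triangle : dist (V 0) (V 1) ≤ dist (V 0) (V s) + dist (V s) (V t) + dist (V t) (V 1) :=
    dist_triangle4 _ _ _ _
  rw [abs_of_nonpos (by linarith), neg_sub]
  linarith [hV 0 h0 s hs hs.1, hV s hs t ht hst, hV t ht 1 h1 ht.2]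

end

/-- A curve `V` such that for each `a ∈ [0,1]` the function `t ↦ d(V a, V t)` is
convex on `[0,1]` is a constant-speed geodesic:
`d(V s, V t) = |s − t| d(V 0, V 1)` for `s, t ∈ [0,1]`. -/
theorem geodesic_of_convex_dist {Y : Type*} [MetricSpace Y] (V : ℝ → Y)
    (h : ∀ a ∈ Set.Icc (0 : ℝ) 1,
      ConvexOn ℝ (Set.Icc (0 : ℝ) 1) (fun t => dist (V a) (V t))) :
    ∀ s ∈ Set.Icc (0 : ℝ) 1, ∀ t ∈ Set.Icc (0 : ℝ) 1,
      dist (V s) (V t) = |s - t| * dist (V 0) (V 1) := fun _ hs _ ht =>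
  dist_eq_abs_sub_mul_of_dist_le_sub_mul
    (fun _ hs _ ht hst => dist_le_sub_mul_of_convexOn_dist h hs ht hst) hs ht
end
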